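/- Let p be a path in DL_d(q) traversing edges e_1, ..., e_n such that for some t < s, edge e_t descends in tree T_i along an edge labeled β (ascending in some T_j), edge e_s ascends in T_i along the same edge labeled β (descending in some T_k), and no edge strictly between e_t and e_s involves tree T_i. Then p is not a geodesic: there is a strictly shorter path with the same endpoints. -/

import Mathlib

/-- A vertex of the (q+1)-regular tree with a distinguished end, in the
horocyclic model: a height `k ∈ ℤ` together with a finitely supported
labelling of the levels strictly below `k`. -/
structure TreeVert (q : ℕ) where
  height : ℤ
  labels : ℤ → ℕ
  labels_lt : ∀ n, labels n = 0 ∨ labels n < q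
  supp_below : ∀ n, height ≤ n → labels n = 0
  fin_supp : (Function.support labels).Finite

namespace DL

variable {q d : ℕ}

/-- `v` is a child of `u` (one step further from the distinguished end). -/
abbrev treeAdjUp (u v : TreeVert q) : Prop :=
  v.height = u.height + 1 ∧ ∀ n, n ≠ u.height → v.labels n = u.labels n

/-- The (q+1)-regular tree. -/
def TreeGraph (q : ℕ) : SimpleGraph (TreeVert q) where
  Adj u v := treeAdjUp u v ∨ treeAdjUp v u
  symm := ⟨fun u v h => Or.symm h⟩
  loopless := by
    constructor
    intro u h
    rcases h with ⟨h1, _⟩ | ⟨h1, _⟩ <;> omega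

/-- The base vertex of the tree. -/
def treeOrigin (q : ℕ) : TreeVert q :=
  ⟨0, fun _ => 0, fun _ => Or.inl rfl, fun _ _ => rfl, by simp⟩

/-- Vertices of the Diestel–Leader graph `DL_d(q)`:
`d`-tuples of tree vertices whose heights sum to zero. -/
def DLVert (d q : ℕ) : Type :=
  {x : Fin d → TreeVert q // (∑ i, (x i).height) = 0}

/-- The Diestel–Leader graph `DL_d(q)`: an edge ascends in one tree and
descends in another, all other coordinates being fixed. -/
def DLGraph (d q : ℕ) : SimpleGraph (DLVert d q) where
  Adj v w := ∃ i j : Fin d, i ≠ j ∧ treeAdjUp (v.1 i) (w.1 i) ∧ treeAdjUp (w.1 j) (v.1 j) ∧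
      ∀ k : Fin d, k ≠ i → k ≠ j → v.1 k = w.1 k
  symm := by
    constructor
    rintro v w ⟨i, j, hij, h1, h2, h3⟩
    exact ⟨j, i, hij.symm, h2, h1, fun k hk1 hk2 => (h3 k hk2 hk1).symm⟩
  loopless := by
    constructor
    rintro v ⟨i, j, hij, ⟨h1, _⟩, _⟩
    omega

/-- The base point of `DL_d(q)`. -/
def origin (d q : ℕ) : DLVert d q :=
  ⟨fun _ => treeOrigin q, by simp [treeOrigin]⟩

/-- A geodesic ray in `DL_d(q)` : an isometric embedding of `ℕ`. -/
def IsGeodesicRay (γ : ℕ → DLVert d q) : Prop :=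
  ∀ m n : ℕ, m ≤ n → (DLGraph d q).dist (γ m) (γ n) = n - m

/-- Two rays are asymptotic when they stay at uniformly bounded distance. -/
def Asymptotic (γ γ' : ℕ → DLVert d q) : Prop :=
  ∃ C : ℕ, ∀ n : ℕ, (DLGraph d q).dist (γ n) (γ' n) ≤ C

instance : TopologicalSpace (DLVert d q) := ⊥

/-- Geodesic rays emanating from the origin, with the topology of uniform
convergence on compact sets (= pointwise convergence, the vertex set being
discrete). -/
def RaySpace (d q : ℕ) : Type :=
  {γ : ℕ → DLVert d q // IsGeodesicRay γ ∧ γ 0 = origin d q}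

instance : TopologicalSpace (RaySpace d q) := by
  unfold RaySpace; infer_instance

lemma reachable_origin (γ : RaySpace d q) (n : ℕ) :
    (DLGraph d q).Reachable (origin d q) (γ.1 n) := by
  cases n with
  | zero => rw [γ.2.2]
  | succ n =>
    have h := γ.2.1 0 (n + 1) (Nat.zero_le _)
    have hne : (DLGraph d q).dist (γ.1 0) (γ.1 (n + 1)) ≠ 0 := by
      rw [h]; omega
    have := SimpleGraph.Reachable.of_dist_ne_zero hne
    rwa [γ.2.2] at this

/-- Asymptoticity as an equivalence relation on geodesic rays from the origin. -/
def asympSetoid (d q : ℕ) : Setoid (RaySpace d q) where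
  r γ γ' := Asymptotic γ.1 γ'.1
  iseqv := by
    constructor
    · intro γ
      exact ⟨0, fun n => by simp [SimpleGraph.dist_self]⟩
    · rintro γ γ' ⟨C, hC⟩
      exact ⟨C, fun n => by rw [SimpleGraph.dist_comm]; exact hC n⟩
    · rintro a b c ⟨C1, h1⟩ ⟨C2, h2⟩
      refine ⟨C1 + C2, fun n => ?_⟩
      have hab : (DLGraph d q).Reachable (a.1 n) (b.1 n) :=
        (reachable_origin a n).symm.trans (reachable_origin b n)
      have hbc : (DLGraph d q).Reachable (b.1 n) (c.1 n) :=
        (reachable_origin b n).symm.trans (reachable_origin c n)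
      obtain ⟨p, hp⟩ := hab.exists_walk_length_eq_dist
      obtain ⟨p', hp'⟩ := hbc.exists_walk_length_eq_dist
      calc (DLGraph d q).dist (a.1 n) (c.1 n) ≤ (p.append p').length :=
            SimpleGraph.dist_le _
        _ = (DLGraph d q).dist (a.1 n) (b.1 n) + (DLGraph d q).dist (b.1 n) (c.1 n) := by
            rw [SimpleGraph.Walk.length_append, hp, hp']
        _ ≤ C1 + C2 := Nat.add_le_add (h1 n) (h2 n)

/-- The visual boundary of `DL_d(q)`: asymptotic classes of geodesic rays
from the origin, with the quotient topology. -/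
def Boundary (d q : ℕ) : Type := Quotient (asympSetoid d q)

instance : TopologicalSpace (Boundary d q) := by
  unfold Boundary; infer_instance

/-- A ray in `DL_2(q)` descends for exactly `n` steps in tree `i`
(bottoming out at height `-n`), then ascends forever in tree `i`.
For `n = 0` this says the ray ascends forever in tree `i` with no turn. -/
def DescendsExactly (i : Fin 2) (n : ℕ) (γ : ℕ → DLVert 2 q) : Prop :=
  (∀ t : ℕ, t ≤ n → ((γ t).1 i).height = -(t : ℤ)) ∧
  (∀ t : ℕ, n ≤ t → ((γ t).1 i).height = (t : ℤ) - 2 * n)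

/-- The subset `C_n^i` of the boundary: classes of rays bottoming out in
tree `i` after descending exactly `n` edges. -/
def Cset (q : ℕ) (i : Fin 2) (n : ℕ) : Set (Boundary 2 q) :=
  {x | ∃ γ : RaySpace 2 q, Quotient.mk (asympSetoid 2 q) γ = x ∧ DescendsExactly i n γ.1}

/-- Projection of a path in `DL_d(q)` to the `i`-th tree. -/
def proj (i : Fin d) (γ : ℕ → DLVert d q) : ℕ → TreeVert q := fun n => (γ n).1 i

/-- Two (lazy) paths in the tree converge to the same end: both eventually
leave every ball, and they come within a uniformly bounded distance of each
other at arbitrarily late times. -/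
def SameEnd (a b : ℕ → TreeVert q) : Prop :=
  (∀ R : ℕ, ∃ N : ℕ, ∀ n, N ≤ n → R ≤ (TreeGraph q).dist (a 0) (a n)) ∧
  (∀ R : ℕ, ∃ N : ℕ, ∀ n, N ≤ n → R ≤ (TreeGraph q).dist (b 0) (b n)) ∧
  (∃ C : ℕ, ∀ N : ℕ, ∃ m n, N ≤ m ∧ N ≤ n ∧ (TreeGraph q).dist (a m) (b n) ≤ C)

/-- The step from `p m` to `p (m+1)` descends in tree `i`. -/
def StepDown (i : Fin d) (p : ℕ → DLVert d q) (m : ℕ) : Prop :=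
  treeAdjUp ((p (m + 1)).1 i) ((p m).1 i)

/-- The step from `p m` to `p (m+1)` ascends in tree `i`. -/
def StepUp (i : Fin d) (p : ℕ → DLVert d q) (m : ℕ) : Prop :=
  treeAdjUp ((p m).1 i) ((p (m + 1)).1 i)

/-- A turn in tree `i`: a subpath beginning with a descent in `T_i` at step `t`,
ending with an ascent in `T_i` at step `s`, with no intervening step
involving `T_i`. -/
def IsTurn (i : Fin d) (p : ℕ → DLVert d q) (t s : ℕ) : Prop :=
  t < s ∧ StepDown i p t ∧ StepUp i p s ∧
    ∀ m, t < m → m < s → (p (m + 1)).1 i = (p m).1 i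


/-! The descent in `T_i` at step `t` is pushed forward past the intermediate edges, none of
which involves `T_i`, by the commutation relations of `DL_d(q)`: it commutes with an edge
sharing no tree with it and with an edge ascending in the same tree as it, and it merges with
an edge descending in the tree where it ascends, which already shortens the path. Once it meets
the ascent along the same edge of `T_i`, the two merge into a single edge or cancel. -/

open SimpleGraph

lemma TreeVert.ext {u v : TreeVert q} (hh : u.height = v.height) (hl : u.labels = v.labels) :
    u = v := by
  cases u; cases v; simp_all

lemma treeAdjUp_left_unique {u u' v : TreeVert q} (h : treeAdjUp u v) (h' : treeAdjUp u' v) :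
    u = u' := by
  obtain ⟨hv, hl⟩ := h
  obtain ⟨hv', hl'⟩ := h'
  have hh : u.height = u'.height := by omega
  refine TreeVert.ext hh (funext fun n => ?_)
  by_cases hn : n = u.height
  · rw [u.supp_below n hn.ge, u'.supp_below n (hh ▸ hn.ge)]
  · rw [← hl n hn, hl' n (hh ▸ hn)]

lemma sum_height_update (g : Fin d → TreeVert q) (a : Fin d) (x : TreeVert q) :
    ∑ k, (Function.update g a x k).height = ∑ k, (g k).height - (g a).height + x.height := by
  classical
  have h : ∀ k, (Function.update g a x k).height =
      Function.update (fun k => (g k).height) a x.height k :=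
    fun k => Function.apply_update (fun _ u => u.height) g a x k
  rw [Finset.sum_congr rfl (fun k _ => h k), Finset.sum_update_of_mem (Finset.mem_univ a),
    Finset.sum_eq_sum_sdiff_singleton_add (Finset.mem_univ a) (fun k => (g k).height)]
  ring

lemma DLVert.exists_update_update (v : DLVert d q) {a b : Fin d} (hab : a ≠ b)
    {x y : TreeVert q} (hxy : x.height + y.height = (v.1 a).height + (v.1 b).height) :
    ∃ z : DLVert d q, z.1 a = x ∧ z.1 b = y ∧ ∀ k, k ≠ a → k ≠ b → z.1 k = v.1 k := by
  have hsum : ∑ k, (Function.update (Function.update v.1 a x) b y k).height = 0 := by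
    rw [sum_height_update, sum_height_update, Function.update_of_ne hab.symm, v.2]
    omega
  refine ⟨⟨_, hsum⟩, ?_, Function.update_self _ _ _, fun k hka hkb => ?_⟩
  · simp only [Function.update_of_ne hab, Function.update_self]
  · simp only [Function.update_of_ne hkb, Function.update_of_ne hka]

lemma edist_le_of_adj_chain {V : Type*} {G : SimpleGraph V} (p : ℕ → V) (a n : ℕ)
    (h : ∀ m, a ≤ m → m < a + n → G.Adj (p m) (p (m + 1))) :
    G.edist (p a) (p (a + n)) ≤ n := by
  induction n with
  | zero => simp
  | succ n ih =>
    calc G.edist (p a) (p (a + (n + 1)))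
        ≤ G.edist (p a) (p (a + n)) + G.edist (p (a + n)) (p (a + n + 1)) := G.edist_triangle
      _ ≤ n + 1 := by
        gcongr
        · exact ih fun m hm hmn => h m hm (by omega)
        · exact (edist_eq_one_iff_adj.2 (h (a + n) (by omega) (by omega))).le

section Moves

variable {i : Fin d} {v w x : DLVert d q}

lemma exists_up_of_adj_of_down (h : (DLGraph d q).Adj v w) (hi : treeAdjUp (w.1 i) (v.1 i)) :
    ∃ a, a ≠ i ∧ treeAdjUp (v.1 a) (w.1 a) ∧ ∀ k, k ≠ a → k ≠ i → v.1 k = w.1 k := by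
  obtain ⟨a, e, hae, hup, hdown, hfix⟩ := h
  obtain rfl : e = i := by
    by_contra hei
    by_cases hai : a = i
    · subst hai
      have := hup.1
      have := hi.1
      omega
    · have := hi.1
      rw [hfix i (Ne.symm hai) (Ne.symm hei)] at this
      omega
  exact ⟨a, hae, hup, hfix⟩

lemma exists_up_down_of_adj_of_eq (h : (DLGraph d q).Adj v w) (hi : w.1 i = v.1 i) :
    ∃ c e, c ≠ e ∧ c ≠ i ∧ e ≠ i ∧ treeAdjUp (v.1 c) (w.1 c) ∧
      treeAdjUp (w.1 e) (v.1 e) ∧ ∀ k, k ≠ c → k ≠ e → v.1 k = w.1 k := by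
  obtain ⟨c, e, hce, hup, hdown, hfix⟩ := h
  have hci : c ≠ i := by
    rintro rfl
    have := hup.1
    rw [hi] at this
    omega
  have hei : e ≠ i := by
    rintro rfl
    have := hdown.1
    rw [hi] at this
    omega
  exact ⟨c, e, hce, hci, hei, hup, hdown, hfix⟩

lemma adj_or_eq_of_down_up (hvw : (DLGraph d q).Adj v w) (hwx : (DLGraph d q).Adj w x)
    (hdown : treeAdjUp (w.1 i) (v.1 i)) (hback : x.1 i = v.1 i) :
    (DLGraph d q).Adj v x ∨ v = x := by
  obtain ⟨a, hai, hupa, hfix⟩ := exists_up_of_adj_of_down hvw hdown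
  obtain ⟨b, hbi, hdownb, hfix'⟩ := exists_up_of_adj_of_down hwx.symm (hback ▸ hdown)
  by_cases hab : a = b
  · subst hab
    refine Or.inr (Subtype.ext (funext fun k => ?_))
    by_cases hki : k = i
    · exact hki ▸ hback.symm
    by_cases hka : k = a
    · exact hka ▸ treeAdjUp_left_unique hupa hdownb
    · exact (hfix k hka hki).trans (hfix' k hka hki).symm
  · refine Or.inl ⟨a, b, hab, hfix' a hab hai ▸ hupa, hfix b (Ne.symm hab) hbi ▸ hdownb,
      fun k hka hkb => ?_⟩
    by_cases hki : k = i
    · exact hki ▸ hback.symm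
    · exact (hfix k hka hki).trans (hfix' k hkb hki).symm

lemma adj_or_exists_swap (hvw : (DLGraph d q).Adj v w) (hwx : (DLGraph d q).Adj w x)
    (hdown : treeAdjUp (w.1 i) (v.1 i)) (hx : x.1 i = w.1 i) :
    (DLGraph d q).Adj v x ∨
      ∃ z, (DLGraph d q).Adj v z ∧ (DLGraph d q).Adj z x ∧ z.1 i = v.1 i := by
  obtain ⟨a, hai, hupa, hfix⟩ := exists_up_of_adj_of_down hvw hdown
  obtain ⟨c, e, hce, hci, hei, hupc, hdowne, hfix'⟩ := exists_up_down_of_adj_of_eq hwx hx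
  have hdown' : treeAdjUp (x.1 i) (v.1 i) := hx ▸ hdown
  by_cases hea : e = a
  · subst hea
    refine Or.inl ⟨c, i, hci, hfix c hce hci ▸ hupc, hdown', fun k hkc hki => ?_⟩
    by_cases hke : k = e
    · rw [hke]; exact treeAdjUp_left_unique hupa hdowne
    · exact (hfix k hke hki).trans (hfix' k hkc hke)
  have hdowne' : treeAdjUp (x.1 e) (v.1 e) := hfix e hea hei ▸ hdowne
  refine Or.inr ?_
  by_cases hca : c = a
  · subst hca
    obtain ⟨z, hzc, hze, hzk⟩ := v.exists_update_update hce (x := w.1 c) (y := x.1 e)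
      (by rw [hupa.1, hdowne'.1]; ring)
    have hzi : z.1 i = v.1 i := hzk i (Ne.symm hci) (Ne.symm hei)
    refine ⟨z, ⟨c, e, hce, hzc ▸ hupa, hze ▸ hdowne', fun k hkc hke => (hzk k hkc hke).symm⟩,
      ⟨c, i, hci, hzc ▸ hupc, hzi ▸ hdown', fun k hkc hki => ?_⟩, hzi⟩
    by_cases hke : k = e
    · rw [hke, hze]
    · rw [hzk k hkc hke, hfix k hkc hki, hfix' k hkc hke]
  · have hupc' : treeAdjUp (v.1 c) (x.1 c) := hfix c hca hci ▸ hupc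
    obtain ⟨z, hzc, hze, hzk⟩ := v.exists_update_update hce (x := x.1 c) (y := x.1 e)
      (by rw [hupc'.1, hdowne'.1]; ring)
    have hzi : z.1 i = v.1 i := hzk i (Ne.symm hci) (Ne.symm hei)
    have hza : z.1 a = v.1 a := hzk a (Ne.symm hca) (Ne.symm hea)
    refine ⟨z, ⟨c, e, hce, hzc ▸ hupc', hze ▸ hdowne', fun k hkc hke => (hzk k hkc hke).symm⟩,
      ⟨a, i, hai, ?_, hzi ▸ hdown', fun k hka hki => ?_⟩, hzi⟩
    · rw [hza, ← hfix' a (Ne.symm hca) (Ne.symm hea)]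
      exact hupa
    · by_cases hkc : k = c
      · rw [hkc, hzc]
      by_cases hke : k = e
      · rw [hke, hze]
      rw [hzk k hkc hke, hfix k hka hki, hfix' k hkc hke]

lemma edist_le_of_down_up (k : ℕ) {p : ℕ → DLVert d q} (hv : (DLGraph d q).Adj v (p 0))
    (hdown : treeAdjUp ((p 0).1 i) (v.1 i))
    (hpath : ∀ m ≤ k, (DLGraph d q).Adj (p m) (p (m + 1)))
    (hmid : ∀ m < k, (p (m + 1)).1 i = (p m).1 i) (hback : (p (k + 1)).1 i = v.1 i) :
    (DLGraph d q).edist v (p (k + 1)) ≤ k + 1 := by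
  induction k generalizing v p with
  | zero =>
    calc (DLGraph d q).edist v (p 1) ≤ 1 :=
          edist_le_one_iff_adj_or_eq.2 (adj_or_eq_of_down_up hv (hpath 0 le_rfl) hdown hback)
      _ = 0 + 1 := by simp
  | succ k ih =>
    rcases adj_or_exists_swap hv (hpath 0 (by omega)) hdown (hmid 0 (by omega)) with
      hadj | ⟨z, hvz, hz, hzi⟩
    · calc (DLGraph d q).edist v (p (k + 1 + 1))
          ≤ (DLGraph d q).edist v (p 1) + (DLGraph d q).edist (p 1) (p (1 + (k + 1))) := by
            rw [Nat.add_comm 1 (k + 1)]; exact (DLGraph d q).edist_triangle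
        _ ≤ 1 + (k + 1) := by
            gcongr
            · exact (edist_eq_one_iff_adj.2 hadj).le
            · exact edist_le_of_adj_chain p 1 (k + 1) fun m hm hmk => hpath m (by omega)
        _ = k + 1 + 1 := by ring
    · calc (DLGraph d q).edist v (p (k + 1 + 1))
          ≤ (DLGraph d q).edist v z + (DLGraph d q).edist z (p (k + 1 + 1)) :=
            (DLGraph d q).edist_triangle
        _ ≤ 1 + (k + 1) := by
            gcongr
            · exact (edist_eq_one_iff_adj.2 hvz).le
            · refine ih (p := fun m => p (m + 1)) hz ?_ (fun m hm => hpath (m + 1) (by omega))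
                (fun m hm => hmid (m + 1) (by omega)) (hback.trans hzi.symm)
              rw [hzi, hmid 0 (by omega)]
              exact hdown
        _ = k + 1 + 1 := by ring

end Moves

theorem not_geodesic_of_backtrack_general {d q : ℕ}
    (p : ℕ → DLVert d q) (n : ℕ)
    (hpath : ∀ m : ℕ, m < n → (DLGraph d q).Adj (p m) (p (m + 1)))
    (i : Fin d) (t s : ℕ) (hts : t < s) (hsn : s < n)
    (hdown : StepDown i p t)
    (hmid : ∀ m, t < m → m < s → (p (m + 1)).1 i = (p m).1 i)
    (hback : (p (s + 1)).1 i = (p t).1 i) :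
    (DLGraph d q).dist (p 0) (p n) < n := by
  obtain ⟨k, rfl⟩ : ∃ k, s = t + 1 + k := ⟨s - t - 1, by omega⟩
  obtain ⟨r, rfl⟩ : ∃ r, n = t + 1 + k + 1 + r := ⟨n - (t + 1 + k) - 1, by omega⟩
  set G := DLGraph d q
  have hbefore : G.edist (p 0) (p t) ≤ t := by
    simpa using edist_le_of_adj_chain p 0 t fun m _ hm => hpath m (by omega)
  have hturn : G.edist (p t) (p (t + 1 + k + 1)) ≤ k + 1 :=
    edist_le_of_down_up k (p := fun m => p (t + 1 + m)) (hpath t (by omega)) hdown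
      (fun m _ => hpath (t + 1 + m) (by omega))
      (fun m hm => hmid (t + 1 + m) (by omega) (by omega)) hback
  have hafter := edist_le_of_adj_chain p (t + 1 + k + 1) r fun m _ hm => hpath m (by omega)
  have hshort : G.edist (p 0) (p (t + 1 + k + 1 + r)) ≤ (t + (k + 1) + r : ℕ) := by
    calc G.edist (p 0) (p (t + 1 + k + 1 + r))
        ≤ G.edist (p 0) (p t) + G.edist (p t) (p (t + 1 + k + 1)) +
            G.edist (p (t + 1 + k + 1)) (p (t + 1 + k + 1 + r)) :=
          G.edist_triangle.trans (add_le_add_left G.edist_triangle _)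
      _ ≤ (t + (k + 1) + r : ℕ) := by push_cast; gcongr
  exact (ENat.toNat_le_of_le_natCast hshort).trans_lt (by omega)

/-- a path in `DL_d(q)` which descends along a tree edge in `T_i`
at step `t` and later ascends along that same edge at step `s`, with no
intervening step involving `T_i`, is not geodesic: its endpoints are at
distance strictly less than its length. -/
theorem not_geodesic_of_backtrack {d q : ℕ} (hq : 2 ≤ q) (hd : 2 ≤ d)
    (p : ℕ → DLVert d q) (n : ℕ)
    (hpath : ∀ m : ℕ, m < n → (DLGraph d q).Adj (p m) (p (m + 1)))
    (i : Fin d) (t s : ℕ) (hts : t < s) (hsn : s < n)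
    (hdown : StepDown i p t)
    (hmid : ∀ m, t < m → m < s → (p (m + 1)).1 i = (p m).1 i)
    (hback : (p (s + 1)).1 i = (p t).1 i) :
    (DLGraph d q).dist (p 0) (p n) < n :=
  not_geodesic_of_backtrack_general p n hpath i t s hts hsn hdown hmid hback

end DL
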